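/- arXiv:2306.12803 — 2 statements merged into one kernel-verified Lean document; each statement's English description precedes it below -/
import Mathlib

section
/- Let 𝒜 = [Z, R₁, R₂] be a consistent bounded preference system on a finite set Z = {z₁,…,z_s} with minimal element z₁ and maximal element z₂, and let p, q : Z → [0,1] be probability mass functions on Z. Then inf_{u ∈ 𝒩_𝒜} Σ_{ℓ=1}^{s} u(z_ℓ)·(p(z_ℓ) − q(z_ℓ)) ≥ 0 if and only if min_{(v₁,…,v_s) ∈ C₀} Σ_{ℓ=1}^{s} v_ℓ·(p(z_ℓ) − q(z_ℓ)) ≥ 0. -/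
/-!
Every normalized representation lies in `C₀`, which gives one inequality between the two
infima. Conversely, fix a normalized representation `u` (a rescaled representation) and
`v ∈ C₀`: every mixture `(1 - ε) v + ε u` with `0 < ε ≤ 1` is again a normalized
representation, because the strict inequalities of `u` survive the weak ones of `v` and the
equalities imposed on `v` are exactly those of `u`. Letting `ε → 0` shows that the two infima
coincide; both are finite since `C₀ ⊆ [0,1]^s` is compact.
-/

open MeasureTheory
open scoped BigOperators

namespace GSD

/-- The strict part `P_R` of a binary relation `R`. -/
def strictPart {α : Type*} (R : α → α → Prop) (a b : α) : Prop := R a b ∧ ¬ R b a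

/-- The indifference part `I_R` of a binary relation `R`. -/
def indiffPart {α : Type*} (R : α → α → Prop) (a b : α) : Prop := R a b ∧ R b a

/-- `[A, R1, R2]` is a preference system: `R1` is a preorder on `A` and `R2` is a preorder
on `R1` (i.e. a reflexive-transitive relation supported on pairs belonging to `R1`). -/
structure IsPrefSystem {A : Type*} (R1 : A → A → Prop) (R2 : A × A → A × A → Prop) : Prop where
  refl1 : ∀ a, R1 a a
  trans1 : ∀ a b c, R1 a b → R1 b c → R1 a c
  sub2 : ∀ p q, R2 p q → R1 p.1 p.2 ∧ R1 q.1 q.2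
  refl2 : ∀ p, R1 p.1 p.2 → R2 p p
  trans2 : ∀ p q r, R2 p q → R2 q r → R2 p r

/-- `u` is a representation of the preference system `[A, R1, R2]`. -/
def IsRepresentation {A : Type*} (R1 : A → A → Prop) (R2 : A × A → A × A → Prop)
    (u : A → ℝ) : Prop :=
  (∀ a b, R1 a b → (u b ≤ u a ∧ (u a = u b ↔ R1 b a))) ∧
  (∀ a b c d, R2 (a, b) (c, d) →
    (u c - u d ≤ u a - u b ∧ (u a - u b = u c - u d ↔ R2 (c, d) (a, b))))

/-- A preference system is consistent if it admits a representation. -/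
def Consistent {A : Type*} (R1 : A → A → Prop) (R2 : A × A → A × A → Prop) : Prop :=
  ∃ u, IsRepresentation R1 R2 u

/-- The preference system is bounded with minimal element `a0` and maximal element `a1`. -/
def Bounded {A : Type*} (R1 : A → A → Prop) (a0 a1 : A) : Prop :=
  (∀ a, R1 a1 a) ∧ (∀ a, R1 a a0) ∧ strictPart R1 a1 a0

/-- Membership in the normalized representation set `𝒩_𝒜`. -/
def NormRep {A : Type*} (R1 : A → A → Prop) (R2 : A × A → A × A → Prop) (a0 a1 : A)
    (u : A → ℝ) : Prop :=
  IsRepresentation R1 R2 u ∧ u a0 = 0 ∧ u a1 = 1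

/-- Membership in `𝒩^δ_𝒜`: normalized representations separating strict pairs by at least `δ`. -/
def NormRepDelta {A : Type*} (R1 : A → A → Prop) (R2 : A × A → A × A → Prop) (a0 a1 : A)
    (δ : ℝ) (u : A → ℝ) : Prop :=
  NormRep R1 R2 a0 a1 u ∧
  (∀ a b, strictPart R1 a b → δ ≤ u a - u b) ∧
  (∀ c d e f, strictPart R2 (c, d) (e, f) → δ ≤ u c - u d - u e + u f)

/-- The constraint set `C` of vectors `(v₁,…,v_s,ξ) ∈ [0,1]^{s+1}`. -/
def ConstraintSet {s : ℕ} (R1 : Fin s → Fin s → Prop)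
    (R2 : (Fin s × Fin s) → (Fin s × Fin s) → Prop) (a0 a1 : Fin s) :
    Set ((Fin s → ℝ) × ℝ) :=
  {w | (∀ i, w.1 i ∈ Set.Icc (0:ℝ) 1) ∧ w.2 ∈ Set.Icc (0:ℝ) 1 ∧
    w.1 a0 = 0 ∧ w.1 a1 = 1 ∧
    (∀ i j, indiffPart R1 i j → w.1 i = w.1 j) ∧
    (∀ i j, strictPart R1 i j → w.2 ≤ w.1 i - w.1 j) ∧
    (∀ k l r t, indiffPart R2 (k, l) (r, t) → w.1 k - w.1 l = w.1 r - w.1 t) ∧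
    (∀ k l r t, strictPart R2 (k, l) (r, t) → w.2 ≤ w.1 k - w.1 l - w.1 r + w.1 t)}

/-- The slice `C_{ξ₀}` of the constraint set at threshold `ξ₀`. -/
def ConstraintSetAt {s : ℕ} (R1 : Fin s → Fin s → Prop)
    (R2 : (Fin s × Fin s) → (Fin s × Fin s) → Prop) (a0 a1 : Fin s) (ξ0 : ℝ) :
    Set (Fin s → ℝ) :=
  {v | (v, ξ0) ∈ ConstraintSet R1 R2 a0 a1}

/-- `p` is a probability mass function on `Fin s` (with values in `[0,1]`). -/
def IsPMF {s : ℕ} (p : Fin s → ℝ) : Prop :=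
  (∀ i, p i ∈ Set.Icc (0:ℝ) 1) ∧ ∑ i, p i = 1

end GSD

open Set Filter Topology

lemma le_of_forall_le_convexCombination {a b c : ℝ}
    (h : ∀ ε ∈ Ioc (0 : ℝ) 1, c ≤ (1 - ε) * a + ε * b) : c ≤ a := by
  have hlim : Tendsto (fun ε : ℝ => (1 - ε) * a + ε * b) (𝓝[>] 0) (𝓝 a) := by
    have hcont : Continuous fun ε : ℝ => (1 - ε) * a + ε * b := by fun_prop
    simpa using (hcont.tendsto 0).mono_left nhdsWithin_le_nhds
  exact ge_of_tendsto hlim (eventually_of_mem (Ioc_mem_nhdsGT zero_lt_one) h)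

theorem LinearMap.sInf_image_eq_of_convexCombination_mem {E : Type*} [AddCommGroup E]
    [Module ℝ E] (f : E →ₗ[ℝ] ℝ) {N C : Set E} (hNC : N ⊆ C) (hC : BddBelow (f '' C))
    {u : E} (hu : u ∈ N) (hmix : ∀ v ∈ C, ∀ ε ∈ Ioc (0 : ℝ) 1, (1 - ε) • v + ε • u ∈ N) :
    sInf (f '' N) = sInf (f '' C) := by
  have hN : BddBelow (f '' N) := hC.mono (image_mono hNC)
  have hNne : (f '' N).Nonempty := ⟨f u, mem_image_of_mem f hu⟩
  refine le_antisymm (le_csInf (hNne.mono (image_mono hNC)) ?_)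
    (csInf_le_csInf hC hNne (image_mono hNC))
  rintro _ ⟨v, hv, rfl⟩
  refine le_of_forall_le_convexCombination (b := f u) fun ε hε => ?_
  calc sInf (f '' N) ≤ f ((1 - ε) • v + ε • u) :=
        csInf_le hN (mem_image_of_mem f (hmix v hv ε hε))
    _ = (1 - ε) * f v + ε * f u := by simp

lemma convexCombination_le_and_eq_iff {P : Prop} {v₁ v₂ u₁ u₂ ε : ℝ} (hε : ε ∈ Ioc (0 : ℝ) 1)
    (hu : u₂ ≤ u₁ ∧ (u₁ = u₂ ↔ P)) (hv : (P → v₁ = v₂) ∧ (¬P → v₂ ≤ v₁)) :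
    (1 - ε) * v₂ + ε * u₂ ≤ (1 - ε) * v₁ + ε * u₁ ∧
      ((1 - ε) * v₁ + ε * u₁ = (1 - ε) * v₂ + ε * u₂ ↔ P) := by
  by_cases hP : P
  · rw [hv.1 hP, hu.2.2 hP]
    exact ⟨le_rfl, iff_of_true rfl hP⟩
  · have hlt : (1 - ε) * v₂ + ε * u₂ < (1 - ε) * v₁ + ε * u₁ :=
      add_lt_add_of_le_of_lt (mul_le_mul_of_nonneg_left (hv.2 hP) (by linarith [hε.2]))
        (mul_lt_mul_of_pos_left (hu.1.lt_of_ne fun h => hP (hu.2.1 h.symm)) hε.1)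
    exact ⟨hlt.le, iff_of_false hlt.ne' hP⟩

namespace GSD

section Representations

variable {A : Type*} {R1 : A → A → Prop} {R2 : A × A → A × A → Prop}

lemma IsRepresentation.affine {u : A → ℝ} (hu : IsRepresentation R1 R2 u) {c : ℝ} (hc : 0 < c)
    (b : ℝ) : IsRepresentation R1 R2 (fun a => c * u a + b) := by
  obtain ⟨h1, h2⟩ := hu
  refine ⟨fun x y hxy => ?_, fun x y z w h => ?_⟩
  · obtain ⟨hle, heq⟩ := h1 x y hxy
    refine ⟨by dsimp only; gcongr, ?_⟩
    rw [← heq, add_left_inj, mul_right_inj' hc.ne']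
  · obtain ⟨hle, heq⟩ := h2 x y z w h
    have hdiff : ∀ x y, c * u x + b - (c * u y + b) = c * (u x - u y) := fun _ _ => by ring
    simp only [hdiff]
    refine ⟨by gcongr, ?_⟩
    rw [← heq, mul_right_inj' hc.ne']

lemma IsRepresentation.lt_of_strictPart {u : A → ℝ} (hu : IsRepresentation R1 R2 u) {a b : A}
    (hab : strictPart R1 a b) : u b < u a :=
  (hu.1 a b hab.1).1.lt_of_ne fun h => hab.2 ((hu.1 a b hab.1).2.1 h.symm)

lemma exists_normRep {a0 a1 : A} (hcons : Consistent R1 R2) (hbd : Bounded R1 a0 a1) :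
    ∃ u, NormRep R1 R2 a0 a1 u := by
  obtain ⟨u, hu⟩ := hcons
  have hpos : 0 < u a1 - u a0 := sub_pos.2 (hu.lt_of_strictPart hbd.2.2)
  refine ⟨fun a => (u a1 - u a0)⁻¹ * u a + -((u a1 - u a0)⁻¹ * u a0),
    hu.affine (inv_pos.2 hpos) _, by ring, ?_⟩
  field_simp
  ring

end Representations

section ConstraintSet

variable {s : ℕ} {R1 : Fin s → Fin s → Prop} {R2 : (Fin s × Fin s) → (Fin s × Fin s) → Prop}
  {a0 a1 : Fin s}

lemma constraintSetAt_subset_Icc (ξ : ℝ) : ConstraintSetAt R1 R2 a0 a1 ξ ⊆ Icc 0 1 :=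
  fun _ hv => ⟨fun i => (hv.1 i).1, fun i => (hv.1 i).2⟩

lemma NormRep.mem_constraintSetAt_zero (hbd : Bounded R1 a0 a1) {u : Fin s → ℝ}
    (hu : NormRep R1 R2 a0 a1 u) : u ∈ ConstraintSetAt R1 R2 a0 a1 0 := by
  obtain ⟨⟨h1, h2⟩, hu0, hu1⟩ := hu
  refine ⟨fun i => ⟨hu0 ▸ (h1 i a0 (hbd.2.1 i)).1, hu1 ▸ (h1 a1 i (hbd.1 i)).1⟩,
    left_mem_Icc.2 zero_le_one, hu0, hu1, fun i j hij => (h1 i j hij.1).2.2 hij.2,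
    fun i j hij => ?_, fun k l r t h => (h2 k l r t h.1).2.2 h.2, fun k l r t h => ?_⟩
  · linarith [(h1 i j hij.1).1]
  · linarith [(h2 k l r t h.1).1]

lemma NormRep.convexCombination {v u : Fin s → ℝ} (hv : v ∈ ConstraintSetAt R1 R2 a0 a1 0)
    (hu : NormRep R1 R2 a0 a1 u) {ε : ℝ} (hε : ε ∈ Ioc (0 : ℝ) 1) :
    NormRep R1 R2 a0 a1 ((1 - ε) • v + ε • u) := by
  simp only [ConstraintSetAt, ConstraintSet, mem_ofPred_eq] at hv
  obtain ⟨-, -, hv0, hv1, hvI1, hvS1, hvI2, hvS2⟩ := hv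
  obtain ⟨⟨h1, h2⟩, hu0, hu1⟩ := hu
  have hdiff : ∀ x y, ((1 - ε) • v + ε • u) x - ((1 - ε) • v + ε • u) y =
      (1 - ε) * (v x - v y) + ε * (u x - u y) := fun x y => by
    simp only [Pi.add_apply, Pi.smul_apply, smul_eq_mul]
    ring
  refine ⟨⟨fun a b hab => ?_, fun a b c d h => ?_⟩, by simp [hv0, hu0], by simp [hv1, hu1]⟩
  · simp only [Pi.add_apply, Pi.smul_apply, smul_eq_mul]
    exact convexCombination_le_and_eq_iff hε (h1 a b hab)
      ⟨fun h => hvI1 a b ⟨hab, h⟩, fun h => by linarith [hvS1 a b ⟨hab, h⟩]⟩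
  · rw [hdiff, hdiff]
    exact convexCombination_le_and_eq_iff hε (h2 a b c d h)
      ⟨fun h' => hvI2 a b c d ⟨h, h'⟩, fun h' => by linarith [hvS2 a b c d ⟨h, h'⟩]⟩

end ConstraintSet

theorem stmt6_general {s : ℕ} (R1 : Fin s → Fin s → Prop)
    (R2 : (Fin s × Fin s) → (Fin s × Fin s) → Prop) (a0 a1 : Fin s)
    (hcons : Consistent R1 R2) (hbd : Bounded R1 a0 a1)
    (p q : Fin s → ℝ) :
    0 ≤ sInf {x | ∃ u, NormRep R1 R2 a0 a1 u ∧ x = ∑ i, u i * (p i - q i)} ↔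
    0 ≤ sInf {x | ∃ v ∈ ConstraintSetAt R1 R2 a0 a1 0,
        x = ∑ i, v i * (p i - q i)} := by
  let f := Fintype.linearCombination ℝ (p - q)
  have hf : ∀ w, f w = ∑ i, w i * (p i - q i) := fun w => by
    simp [f, Fintype.linearCombination_apply]
  obtain ⟨u, hu⟩ := exists_normRep hcons hbd
  have hC : BddBelow (f '' ConstraintSetAt R1 R2 a0 a1 0) :=
    (isCompact_Icc.bddBelow_image f.continuous_of_finiteDimensional.continuousOn).mono
      (image_mono (constraintSetAt_subset_Icc 0))
  have key := f.sInf_image_eq_of_convexCombination_mem (N := {u | NormRep R1 R2 a0 a1 u})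
    (fun _ hw => hw.mem_constraintSetAt_zero hbd) hC hu fun _ hv _ hε => hu.convexCombination hv hε
  simp only [image, mem_ofPred_eq, hf] at key
  simp only [eq_comm (b := ∑ i, _ * _), key]

/-- Proposition 4 ii): in-sample GSD (infimum over `𝒩_𝒜` nonnegative) holds iff the
optimal value of the linear program over `C₀` is nonnegative. -/
theorem stmt6 {s : ℕ} (R1 : Fin s → Fin s → Prop)
    (R2 : (Fin s × Fin s) → (Fin s × Fin s) → Prop) (a0 a1 : Fin s)
    (hps : IsPrefSystem R1 R2) (hcons : Consistent R1 R2) (hbd : Bounded R1 a0 a1)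
    (p q : Fin s → ℝ) (hp : IsPMF p) (hq : IsPMF q) :
    0 ≤ sInf {x | ∃ u, NormRep R1 R2 a0 a1 u ∧ x = ∑ i, u i * (p i - q i)} ↔
    0 ≤ sInf {x | ∃ v ∈ ConstraintSetAt R1 R2 a0 a1 0,
        x = ∑ i, v i * (p i - q i)} :=
  stmt6_general R1 R2 a0 a1 hcons hbd p q

end GSD
end

section
/- Let π be a probability measure on (Ω,𝒮₁), r ∈ ℕ, 0 ≤ z ≤ r, and let X = (Δ₁,…,Δ_r), Y = (Λ₁,…,Λ_r) ∈ ℱ_{(pref(ℝ^r),π)} with Δ_j, Λ_j π-integrable for all j. If (X,Y) ∈ R_{(pref(ℝ^r),π)}, then for every ordinal dimension j ∈ {z+1,…,r}, the component Δ_j first-order stochastically dominates Λ_j, i.e., E_π(u∘Δ_j) ≥ E_π(u∘Λ_j) for every bounded nondecreasing measurable function u : ℝ → ℝ. -/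
/-!
For `ε > 0` the function `x ↦ u (x j) + ε * ∑ i, x i` represents `pref(ℝ^r)` whenever `u` is
nondecreasing and `j` is ordinal: the coordinate sum is a representation, and `x ↦ u (x j)`
respects both relations weakly, because in an ordinal dimension `(a, b) R₂* (c, d)` forces
`b_j ≤ d_j ≤ c_j ≤ a_j`. Applying GSD to these representations and letting `ε → 0` gives
`E u(Λ_j) ≤ E u(Δ_j)`.
-/

open MeasureTheory
open scoped BigOperators

namespace GSD

/-- Membership in `ℱ_{(𝒜,π)}`: all representation-composites are integrable. -/
def memF {Ω A : Type*} [MeasurableSpace Ω] (π : Measure Ω)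
    (R1 : A → A → Prop) (R2 : A × A → A × A → Prop) (X : Ω → A) : Prop :=
  ∀ u, IsRepresentation R1 R2 u → Integrable (fun ω => u (X ω)) π

/-- The generalized stochastic dominance (GSD) relation `R_{(𝒜,π)}`. -/
def GSDrel {Ω A : Type*} [MeasurableSpace Ω] (π : Measure Ω)
    (R1 : A → A → Prop) (R2 : A × A → A × A → Prop) (X Y : Ω → A) : Prop :=
  ∀ u, IsRepresentation R1 R2 u → ∫ ω, u (Y ω) ∂π ≤ ∫ ω, u (X ω) ∂π

/-- The relation `R₁*` of `pref(ℝ^r)`: componentwise dominance. -/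
def R1star (r : ℕ) (x y : Fin r → ℝ) : Prop := ∀ j, y j ≤ x j

/-- The relation `R₂*` of `pref(ℝ^r)` with the first `z` dimensions cardinal and the
remaining ones ordinal. -/
def R2star (r z : ℕ) (p q : (Fin r → ℝ) × (Fin r → ℝ)) : Prop :=
  R1star r p.1 p.2 ∧ R1star r q.1 q.2 ∧
  (∀ j : Fin r, (j : ℕ) < z → q.1 j - q.2 j ≤ p.1 j - p.2 j) ∧
  (∀ j : Fin r, z ≤ (j : ℕ) → p.2 j ≤ q.2 j ∧ q.2 j ≤ q.1 j ∧ q.1 j ≤ p.1 j)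

open Filter Topology

def IsWeakRepresentation {A : Type*} (R1 : A → A → Prop) (R2 : A × A → A × A → Prop)
    (v : A → ℝ) : Prop :=
  (∀ a b, R1 a b → v b ≤ v a) ∧ (∀ a b c d, R2 (a, b) (c, d) → v c - v d ≤ v a - v b)

section Representation

variable {A : Type*} {R1 : A → A → Prop} {R2 : A × A → A × A → Prop} {v w : A → ℝ}

/-- Equality of the perturbed differences forces equality of both summands, so the
indifference clauses are inherited from `w`. -/
theorem IsRepresentation.weak_add_const_mul (hw : IsRepresentation R1 R2 w)
    (hv : IsWeakRepresentation R1 R2 v) {ε : ℝ} (hε : 0 < ε) :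
    IsRepresentation R1 R2 (fun a => v a + ε * w a) := by
  refine ⟨fun a b hab => ?_, fun a b c d habcd => ?_⟩ <;> dsimp only
  · have hvab := hv.1 a b hab
    obtain ⟨hwab, hweq⟩ := hw.1 a b hab
    refine ⟨by nlinarith, fun heq => hweq.1 (by nlinarith), fun hba => ?_⟩
    linear_combination le_antisymm (hv.1 b a hba) hvab + ε * hweq.2 hba
  · have hvabcd := hv.2 a b c d habcd
    obtain ⟨hwabcd, hweq⟩ := hw.2 a b c d habcd
    refine ⟨by nlinarith, fun heq => hweq.1 (by nlinarith), fun hcdab => ?_⟩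
    linear_combination le_antisymm (hv.2 c d a b hcdab) hvabcd + ε * hweq.2 hcdab

end Representation

theorem le_of_forall_pos_add_mul_le {a b c d : ℝ} (h : ∀ ε > 0, a + ε * c ≤ b + ε * d) :
    a ≤ b := by
  have hlim : ∀ x y : ℝ, Tendsto (fun ε => x + ε * y) (𝓝[>] 0) (𝓝 x) := fun x y => by
    simpa using ((continuous_const.add (continuous_id.mul continuous_const)).tendsto
      (0 : ℝ) (f := fun ε : ℝ => x + ε * y)).mono_left nhdsWithin_le_nhds
  exact le_of_tendsto_of_tendsto (hlim a c) (hlim b d)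
    (eventually_nhdsWithin_of_forall fun ε hε => h ε hε)

theorem GSDrel.integral_le_of_isWeakRepresentation {Ω A : Type*} [MeasurableSpace Ω]
    {π : Measure Ω} {R1 : A → A → Prop} {R2 : A × A → A × A → Prop} {X Y : Ω → A}
    {v w : A → ℝ} (hXY : GSDrel π R1 R2 X Y) (hw : IsRepresentation R1 R2 w)
    (hv : IsWeakRepresentation R1 R2 v)
    (hvX : Integrable (fun ω => v (X ω)) π) (hvY : Integrable (fun ω => v (Y ω)) π)
    (hwX : Integrable (fun ω => w (X ω)) π) (hwY : Integrable (fun ω => w (Y ω)) π) :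
    ∫ ω, v (Y ω) ∂π ≤ ∫ ω, v (X ω) ∂π := by
  refine le_of_forall_pos_add_mul_le (c := ∫ ω, w (Y ω) ∂π) (d := ∫ ω, w (X ω) ∂π)
    fun ε hε => ?_
  have h := hXY _ (hw.weak_add_const_mul hv hε)
  rwa [integral_add hvY (hwY.const_mul ε), integral_add hvX (hwX.const_mul ε),
    integral_const_mul, integral_const_mul] at h

section Pref

variable {r z : ℕ}

theorem isRepresentation_sum : IsRepresentation (R1star r) (R2star r z) (fun x => ∑ i, x i) := by
  refine ⟨fun a b hab => ?_, fun a b c d habcd => ?_⟩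
  · refine ⟨Finset.sum_le_sum fun i _ => hab i, fun heq => ?_, fun hba => ?_⟩
    · exact fun i => ((Finset.sum_eq_sum_iff_of_le fun i _ => hab i).1 heq.symm i
        (Finset.mem_univ i)).ge
    · rw [funext fun i => le_antisymm (hba i) (hab i)]
  obtain ⟨hab, hcd, hcard, hord⟩ := habcd
  have hdiff : ∀ i, c i - d i ≤ a i - b i := fun i => by
    rcases lt_or_ge (i : ℕ) z with hi | hi
    · exact hcard i hi
    · obtain ⟨hbd, -, hca⟩ := hord i hi
      linarith
  simp only [← Finset.sum_sub_distrib]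
  refine ⟨Finset.sum_le_sum fun i _ => hdiff i, ?_⟩
  rw [eq_comm, Finset.sum_eq_sum_iff_of_le fun i _ => hdiff i]
  constructor
  · intro heq
    refine ⟨hcd, hab, fun i _ => (heq i (Finset.mem_univ i)).ge, fun i hi => ?_⟩
    obtain ⟨hbd, -, hca⟩ := hord i hi
    have hi_eq := heq i (Finset.mem_univ i)
    exact ⟨by linarith, hab i, by linarith⟩
  · rintro ⟨-, -, hcard', hord'⟩ i -
    rcases lt_or_ge (i : ℕ) z with hi | hi
    · exact le_antisymm (hcard i hi) (hcard' i hi)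
    · obtain ⟨hbd, -, hca⟩ := hord i hi
      obtain ⟨hdb, -, hac⟩ := hord' i hi
      linarith

theorem isWeakRepresentation_comp_apply {j : Fin r} (hj : z ≤ (j : ℕ)) {u : ℝ → ℝ}
    (hu : Monotone u) : IsWeakRepresentation (R1star r) (R2star r z) (fun x => u (x j)) := by
  refine ⟨fun a b hab => hu (hab j), fun a b c d habcd => ?_⟩
  obtain ⟨hbd, -, hca⟩ := habcd.2.2.2 j hj
  linarith [hu hbd, hu hca]

end Pref

theorem stmt15_general {Ω : Type*} [MeasurableSpace Ω] (π : Measure Ω) [IsProbabilityMeasure π]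
    (r z : ℕ) (X Y : Ω → (Fin r → ℝ))
    (hXi : ∀ j, Integrable (fun ω => X ω j) π) (hYi : ∀ j, Integrable (fun ω => Y ω j) π)
    (hGSD : GSDrel π (R1star r) (R2star r z) X Y) :
    ∀ j : Fin r, z ≤ (j : ℕ) →
      ∀ u : ℝ → ℝ, Measurable u → Monotone u → (∃ B, ∀ t, |u t| ≤ B) →
        ∫ ω, u (Y ω j) ∂π ≤ ∫ ω, u (X ω j) ∂π := by
  intro j hj u hu_meas hu_mono ⟨B, hB⟩
  have hu_int : ∀ W : Ω → Fin r → ℝ, Integrable (fun ω => W ω j) π →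
      Integrable (fun ω => u (W ω j)) π := fun W hW =>
    .of_bound (hu_meas.comp_aemeasurable hW.aemeasurable).aestronglyMeasurable B
      (.of_forall fun ω => hB (W ω j))
  exact hGSD.integral_le_of_isWeakRepresentation isRepresentation_sum
    (isWeakRepresentation_comp_apply hj hu_mono) (hu_int X (hXi j)) (hu_int Y (hYi j))
    (integrable_finsetSum _ fun i _ => hXi i) (integrable_finsetSum _ fun i _ => hYi i)

/-- Proposition 7 iii) II.: GSD on `pref(ℝ^r)` implies first-order stochastic dominance
in every ordinal dimension `j > z`. -/
theorem stmt15 {Ω : Type*} [MeasurableSpace Ω] (π : Measure Ω) [IsProbabilityMeasure π]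
    (r z : ℕ) (hz : z ≤ r) (X Y : Ω → (Fin r → ℝ))
    (hX : memF π (R1star r) (R2star r z) X) (hY : memF π (R1star r) (R2star r z) Y)
    (hXi : ∀ j, Integrable (fun ω => X ω j) π) (hYi : ∀ j, Integrable (fun ω => Y ω j) π)
    (hGSD : GSDrel π (R1star r) (R2star r z) X Y) :
    ∀ j : Fin r, z ≤ (j : ℕ) →
      ∀ u : ℝ → ℝ, Measurable u → Monotone u → (∃ B, ∀ t, |u t| ≤ B) →
        ∫ ω, u (Y ω j) ∂π ≤ ∫ ω, u (X ω j) ∂π :=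
  stmt15_general π r z X Y hXi hYi hGSD

end GSD
end
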